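/- Let a and b be linear operators on ℂ² satisfying ab + ba = 1, a² = 0, b² = 0, let φ₀ satisfy aφ₀ = 0 and Ψ₀ satisfy b*Ψ₀ = 0 with ⟨φ₀, Ψ₀⟩ = 1, set φ₁ := bφ₀, Ψ₁ := a*Ψ₀, N := ba, and define S_φ f := ⟨φ₀,f⟩φ₀ + ⟨φ₁,f⟩φ₁ and S_Ψ f := ⟨Ψ₀,f⟩Ψ₀ + ⟨Ψ₁,f⟩Ψ₁. Then the intertwining relations S_Ψ N = N* S_Ψ and S_φ N* = N S_φ hold. -/

import Mathlib

/-!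
The identities `a b a = a` and `b a b = b`, consequences of the pseudo-fermion relations, show
that `φ₀, φ₁` are eigenvectors of `N = b a` and `Ψ₀, Ψ₁` eigenvectors of `N*`, all with the real
eigenvalues `0, 1`. An operator `S f = ∑ ⟪eᵢ, f⟫ eᵢ` built from eigenvectors `eᵢ` of `N` with real
eigenvalues satisfies `S N* = N S`, since `⟪eᵢ, N* f⟫ = λᵢ ⟪eᵢ, f⟫`.
-/

open Matrix
open scoped InnerProductSpace ComplexOrder

noncomputable section

/-- Action of a 2×2 complex matrix (an operator) on a vector of ℂ². -/
def act (A : Matrix (Fin 2) (Fin 2) ℂ) (x : EuclideanSpace ℂ (Fin 2)) :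
    EuclideanSpace ℂ (Fin 2) := WithLp.toLp 2 (A.mulVec x)

theorem mul_mul_eq_left_of_anticomm {R : Type*} [Ring R] {a b : R}
    (hab : a * b + b * a = 1) (ha : a * a = 0) : a * b * a = a := by
  calc a * b * a = a * (a * b + b * a) - (a * a) * b := by noncomm_ring
    _ = a := by rw [hab, ha]; simp

section act

variable (A B : Matrix (Fin 2) (Fin 2) ℂ)

lemma act_eq_toEuclideanLin : act A = toEuclideanLin A := by
  ext x i
  simp [act, toLpLin_apply]

lemma act_zero : act A 0 = 0 := by
  rw [act_eq_toEuclideanLin, map_zero]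

lemma act_mul (x : EuclideanSpace ℂ (Fin 2)) : act (A * B) x = act A (act B x) := by
  simp only [act, WithLp.ofLp_toLp, mulVec_mulVec]

lemma inner_act_conjTranspose_left (x y : EuclideanSpace ℂ (Fin 2)) :
    ⟪act Aᴴ x, y⟫_ℂ = ⟪x, act A y⟫_ℂ := by
  rw [act_eq_toEuclideanLin, act_eq_toEuclideanLin, toEuclideanLin_conjTranspose_eq_adjoint,
    LinearMap.adjoint_inner_left]

variable {A B}

lemma eq_of_act_eq (h : ∀ x, act A x = act B x) : A = B := by
  rw [act_eq_toEuclideanLin, act_eq_toEuclideanLin] at h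
  exact toEuclideanLin.injective (LinearMap.ext h)

theorem mul_conjTranspose_eq_of_eigenvectors {ι : Type*} [Fintype ι]
    {N S : Matrix (Fin 2) (Fin 2) ℂ} {e : ι → EuclideanSpace ℂ (Fin 2)} {μ : ι → ℝ}
    (he : ∀ i, act N (e i) = (μ i : ℂ) • e i)
    (hS : ∀ f, act S f = ∑ i, ⟪e i, f⟫_ℂ • e i) :
    S * Nᴴ = N * S := by
  refine eq_of_act_eq fun f => ?_
  rw [act_mul, act_mul, hS, hS, act_eq_toEuclideanLin N, map_sum]
  refine Finset.sum_congr rfl fun i _ => ?_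
  rw [map_smul, ← act_eq_toEuclideanLin, ← inner_act_conjTranspose_left,
    conjTranspose_conjTranspose, he, inner_smul_left, Complex.conj_ofReal, smul_smul, mul_comm]

end act

theorem stmt8_general (a b Sφ SΨ : Matrix (Fin 2) (Fin 2) ℂ)
    (hab : a * b + b * a = 1) (ha2 : a * a = 0) (hb2 : b * b = 0)
    (φ₀ Ψ₀ : EuclideanSpace ℂ (Fin 2))
    (hvacφ : act a φ₀ = 0) (hvacΨ : act bᴴ Ψ₀ = 0)
    (hSφ : ∀ f, act Sφ f = ⟪φ₀, f⟫_ℂ • φ₀ + ⟪act b φ₀, f⟫_ℂ • act b φ₀)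
    (hSΨ : ∀ f, act SΨ f = ⟪Ψ₀, f⟫_ℂ • Ψ₀ + ⟪act aᴴ Ψ₀, f⟫_ℂ • act aᴴ Ψ₀) :
    SΨ * (b * a) = (b * a)ᴴ * SΨ ∧ Sφ * (b * a)ᴴ = (b * a) * Sφ := by
  have haba : a * b * a = a := mul_mul_eq_left_of_anticomm hab ha2
  have hbab : b * a * b = b := mul_mul_eq_left_of_anticomm ((add_comm _ _).trans hab) hb2
  have hΨ₀ : act (b * a)ᴴ Ψ₀ = 0 := by rw [conjTranspose_mul, act_mul, hvacΨ, act_zero]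
  have hΨ₁ : act (b * a)ᴴ (act aᴴ Ψ₀) = act aᴴ Ψ₀ := by
    rw [← act_mul, ← conjTranspose_mul, ← mul_assoc, haba]
  have hφ₀ : act (b * a) φ₀ = 0 := by rw [act_mul, hvacφ, act_zero]
  have hφ₁ : act (b * a) (act b φ₀) = act b φ₀ := by rw [← act_mul, hbab]
  have hΨ : ∀ i, act (b * a)ᴴ (![Ψ₀, act aᴴ Ψ₀] i) =
      ((![0, 1] : Fin 2 → ℝ) i : ℂ) • ![Ψ₀, act aᴴ Ψ₀] i :=
    Fin.forall_fin_two.2 ⟨by simpa using hΨ₀, by simpa using hΨ₁⟩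
  have hφ : ∀ i, act (b * a) (![φ₀, act b φ₀] i) =
      ((![0, 1] : Fin 2 → ℝ) i : ℂ) • ![φ₀, act b φ₀] i :=
    Fin.forall_fin_two.2 ⟨by simpa using hφ₀, by simpa using hφ₁⟩
  constructor
  · simpa using mul_conjTranspose_eq_of_eigenvectors hΨ (by simpa [Fin.sum_univ_two] using hSΨ)
  · exact mul_conjTranspose_eq_of_eigenvectors hφ (by simpa [Fin.sum_univ_two] using hSφ)

/-- The intertwining relations `S_Ψ N = N* S_Ψ` and `S_φ N* = N S_φ`,
where `N = b a`. -/
theorem stmt8 (a b Sφ SΨ : Matrix (Fin 2) (Fin 2) ℂ)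
    (hab : a * b + b * a = 1) (ha2 : a * a = 0) (hb2 : b * b = 0)
    (φ₀ Ψ₀ : EuclideanSpace ℂ (Fin 2))
    (hvacφ : act a φ₀ = 0) (hvacΨ : act bᴴ Ψ₀ = 0)
    (hnorm : ⟪φ₀, Ψ₀⟫_ℂ = 1)
    (hSφ : ∀ f, act Sφ f = ⟪φ₀, f⟫_ℂ • φ₀ + ⟪act b φ₀, f⟫_ℂ • act b φ₀)
    (hSΨ : ∀ f, act SΨ f = ⟪Ψ₀, f⟫_ℂ • Ψ₀ + ⟪act aᴴ Ψ₀, f⟫_ℂ • act aᴴ Ψ₀) :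
    SΨ * (b * a) = (b * a)ᴴ * SΨ ∧ Sφ * (b * a)ᴴ = (b * a) * Sφ :=
  stmt8_general a b Sφ SΨ hab ha2 hb2 φ₀ Ψ₀ hvacφ hvacΨ hSφ hSΨ
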